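/- Let R be a commutative ring, I a nilpotent ideal of R (I^e = (0) for some e ≥ 1), and n ≥ 1. Then TJC(R,I,n) holds if and only if JC(R,n) holds. -/

import Mathlib

open MvPowerSeries

/-- Membership in the Tate algebra `(R,I)⟨X_1,…,X_n⟩`: for every `k ≥ 1`, all but finitely
many coefficients lie in `I ^ k`. -/
def TateMem {n : ℕ} {R : Type*} [CommRing R] (I : Ideal R)
    (f : MvPowerSeries (Fin n) R) : Prop :=
  ∀ k : ℕ, 1 ≤ k → {d : Fin n →₀ ℕ | MvPowerSeries.coeff d f ∉ I ^ k}.Finite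

/-- The formal partial derivative of a multivariate power series with respect to `X j`. -/
noncomputable def psDeriv {n : ℕ} {R : Type*} [CommRing R] (j : Fin n)
    (f : MvPowerSeries (Fin n) R) : MvPowerSeries (Fin n) R :=
  fun d => (d j + 1 : ℕ) * MvPowerSeries.coeff (d + Finsupp.single j 1) f

/-- Substitution of the power series `G j` for the variables `X j` in `f`
(the intended use is when each `G j` has zero constant coefficient, in which case
the `finsum` below is a finite sum for each fixed monomial). -/
noncomputable def psSubst {n : ℕ} {R : Type*} [CommRing R]
    (G : Fin n → MvPowerSeries (Fin n) R) (f : MvPowerSeries (Fin n) R) :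
    MvPowerSeries (Fin n) R :=
  fun e => ∑ᶠ d : Fin n →₀ ℕ,
    MvPowerSeries.coeff d f * MvPowerSeries.coeff e (∏ j, G j ^ d j)

/-- `f` is a unit of the Tate algebra `(R,I)⟨X_1,…,X_n⟩`. -/
def TateUnit {n : ℕ} {R : Type*} [CommRing R] (I : Ideal R)
    (f : MvPowerSeries (Fin n) R) : Prop :=
  TateMem I f ∧ ∃ g, TateMem I g ∧ f * g = 1

/-- The Jacobian conjecture `JC(R,n)`. -/
def JC (R : Type*) [CommRing R] (n : ℕ) : Prop :=
  ∀ F : Fin n → MvPolynomial (Fin n) R,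
    IsUnit (Matrix.det (Matrix.of fun i j => MvPolynomial.pderiv j (F i))) →
    ∃ G : Fin n → MvPolynomial (Fin n) R,
      (∀ i, MvPolynomial.bind₁ G (F i) = MvPolynomial.X i) ∧
      (∀ i, MvPolynomial.bind₁ F (G i) = MvPolynomial.X i)

/-- The Tate-Jacobian conjecture `TJC(R,I,n)`. -/
def TJC (R : Type*) [CommRing R] (I : Ideal R) (n : ℕ) : Prop :=
  ∀ F : Fin n → MvPowerSeries (Fin n) R,
    (∀ i, TateMem I (F i)) →
    (∀ i, MvPowerSeries.constantCoeff (F i) = 0) →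
    TateUnit I (Matrix.det (Matrix.of fun i j => psDeriv j (F i))) →
    ∃ G : Fin n → MvPowerSeries (Fin n) R,
      (∀ i, TateMem I (G i)) ∧
      (∀ i, MvPowerSeries.constantCoeff (G i) = 0) ∧
      (∀ i, psSubst G (F i) = MvPowerSeries.X i) ∧
      (∀ i, psSubst F (G i) = MvPowerSeries.X i)

/-!
Since `I ^ e = 0`, the Tate condition for a single `k > e` already says that all but finitely
many coefficients vanish, so `(R,I)⟨X_1,…,X_n⟩` is the polynomial ring. On polynomials the formal
derivative and the substitution are the polynomial ones, and a polynomial is a Tate unit iff it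
is a unit of `R[X]`. Hence TJC(R,I,n) is JC(R,n) for maps fixing the origin; a general polynomial
map is reduced to that case by subtracting its constant term, which leaves the Jacobian unchanged
and is undone by a translation.
-/

namespace MvPolynomial

variable {σ R : Type*} [CommRing R]

theorem constantCoeff_bind₁_of_constantCoeff_eq_zero {F : σ → MvPolynomial σ R}
    (hF : ∀ i, constantCoeff (F i) = 0) (q : MvPolynomial σ R) :
    constantCoeff (bind₁ F q) = constantCoeff q := by
  simpa [eval_zero, hF] using eval₂Hom_bind₁ (RingHom.id R) 0 F q

theorem bind₁_inverse_add_C {F G : σ → MvPolynomial σ R} (c : σ → R)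
    (hGF : ∀ i, bind₁ G (F i) = X i) (hFG : ∀ i, bind₁ F (G i) = X i) :
    (∀ i, bind₁ (fun j => bind₁ (fun k => X k - C (c k)) (G j)) (F i + C (c i)) = X i) ∧
      (∀ i, bind₁ (fun j => F j + C (c j)) (bind₁ (fun k => X k - C (c k)) (G i)) = X i) := by
  constructor
  · intro i
    rw [map_add, bind₁_C_right, ← bind₁_bind₁, hGF, bind₁_X_right, sub_add_cancel]
  · intro i
    rw [bind₁_bind₁]
    simp only [map_sub, bind₁_X_right, bind₁_C_right, add_sub_cancel_right]
    exact hFG i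

end MvPolynomial

section TateAlgebra

variable {n : ℕ} {R : Type*} [CommRing R] {I : Ideal R}

theorem tateMem_coe (p : MvPolynomial (Fin n) R) : TateMem I (p : MvPowerSeries (Fin n) R) :=
  fun _ _ => p.support.finite_toSet.subset fun d hd =>
    MvPolynomial.mem_support_iff.mpr fun h => hd (by simp [h])

theorem TateMem.exists_eq_coe {e : ℕ} (hI : I ^ e = ⊥) {f : MvPowerSeries (Fin n) R}
    (hf : TateMem I f) : ∃ p : MvPolynomial (Fin n) R, f = p := by
  have hfin : (Function.support fun d => coeff d f).Finite := by
    -- `e + 1` rather than `e`: `TateMem` says nothing about `k = 0`.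
    refine (hf (e + 1) e.succ_pos).subset fun d hd h => hd ?_
    simpa [hI] using Ideal.pow_le_pow_right e.le_succ h
  refine ⟨∑ d ∈ hfin.toFinset, MvPolynomial.monomial d (coeff d f), ?_⟩
  ext d
  simp [MvPolynomial.coeff_sum, MvPolynomial.coeff_monomial]

theorem tateUnit_coe_iff {e : ℕ} (hI : I ^ e = ⊥) (p : MvPolynomial (Fin n) R) :
    TateUnit I (p : MvPowerSeries (Fin n) R) ↔ IsUnit p := by
  refine ⟨fun ⟨_, g, hg, hpg⟩ => ?_, fun hp => ?_⟩
  · obtain ⟨q, rfl⟩ := hg.exists_eq_coe hI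
    rw [← MvPolynomial.coe_mul, MvPolynomial.coe_eq_one_iff] at hpg
    exact .of_mul_eq_one q hpg
  · obtain ⟨q, hpq⟩ := hp.exists_right_inv
    refine ⟨tateMem_coe p, q, tateMem_coe q, ?_⟩
    rw [← MvPolynomial.coe_mul, hpq, MvPolynomial.coe_one]

theorem psDeriv_coe (j : Fin n) (p : MvPolynomial (Fin n) R) :
    psDeriv j (p : MvPowerSeries (Fin n) R) = MvPolynomial.pderiv j p := by
  ext d
  change ((d j + 1 : ℕ) : R) * _ = _
  rw [MvPolynomial.coeff_coe, MvPolynomial.coeff_coe, MvPolynomial.coeff_pderiv, mul_comm]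
  push_cast
  rfl

theorem det_psDeriv_coe (F : Fin n → MvPolynomial (Fin n) R) :
    Matrix.det (Matrix.of fun i j => psDeriv j (F i : MvPowerSeries (Fin n) R)) =
      Matrix.det (Matrix.of fun i j => MvPolynomial.pderiv j (F i)) := by
  rw [← MvPolynomial.coeToMvPowerSeries.ringHom_apply, RingHom.map_det]
  congr 1
  ext i j
  simp [psDeriv_coe]

theorem psSubst_coe (G : Fin n → MvPolynomial (Fin n) R) (p : MvPolynomial (Fin n) R) :
    psSubst (fun j => (G j : MvPowerSeries (Fin n) R)) p = MvPolynomial.bind₁ G p := by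
  ext e
  change ∑ᶠ d, _ = _
  rw [finsum_eq_finsetSum_of_support_subset (s := p.support)]
  · conv_rhs =>
      rw [p.as_sum, map_sum, ← MvPolynomial.coeToMvPowerSeries.ringHom_apply, map_sum, map_sum]
    refine Finset.sum_congr rfl fun d _ => ?_
    rw [MvPolynomial.bind₁_monomial, Finset.prod_subset d.support.subset_univ
        fun i _ hi => by rw [Finsupp.notMem_support_iff.mp hi, pow_zero],
      map_mul, map_prod MvPolynomial.coeToMvPowerSeries.ringHom]
    simp
  · exact fun d hd => MvPolynomial.mem_support_iff.mpr (left_ne_zero_of_mul hd)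

end TateAlgebra

def JCAtOrigin (R : Type*) [CommRing R] (n : ℕ) : Prop :=
  ∀ F : Fin n → MvPolynomial (Fin n) R,
    (∀ i, MvPolynomial.constantCoeff (F i) = 0) →
    IsUnit (Matrix.det (Matrix.of fun i j => MvPolynomial.pderiv j (F i))) →
    ∃ G : Fin n → MvPolynomial (Fin n) R,
      (∀ i, MvPolynomial.bind₁ G (F i) = MvPolynomial.X i) ∧
      (∀ i, MvPolynomial.bind₁ F (G i) = MvPolynomial.X i)

section Reduction

variable {R : Type*} [CommRing R] {n : ℕ}

theorem jc_iff_jcAtOrigin : JC R n ↔ JCAtOrigin R n := by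
  refine ⟨fun h F _ => h F, fun h F hF => ?_⟩
  set c := fun i => MvPolynomial.constantCoeff (F i)
  obtain ⟨G, hGF, hFG⟩ := h (fun i => F i - MvPolynomial.C (c i)) (by simp [c]) (by
    simpa [MvPolynomial.pderiv_C] using hF)
  have hinv := MvPolynomial.bind₁_inverse_add_C c hGF hFG
  simp only [sub_add_cancel] at hinv
  exact ⟨_, hinv⟩

theorem tjc_iff_jcAtOrigin {I : Ideal R} {e : ℕ} (hI : I ^ e = ⊥) :
    TJC R I n ↔ JCAtOrigin R n := by
  constructor
  · intro h F hF0 hF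
    obtain ⟨G, hG, -, hGF, hFG⟩ := h (fun i => F i) (fun i => tateMem_coe (F i)) hF0
      ((det_psDeriv_coe F).symm ▸ (tateUnit_coe_iff hI _).mpr hF)
    choose g hg using fun i => (hG i).exists_eq_coe hI
    obtain rfl : G = fun i => (g i : MvPowerSeries (Fin n) R) := funext hg
    refine ⟨g, fun i => ?_, fun i => ?_⟩
    · rw [← MvPolynomial.coe_inj, ← psSubst_coe, hGF i, MvPolynomial.coe_X]
    · rw [← MvPolynomial.coe_inj, ← psSubst_coe, hFG i, MvPolynomial.coe_X]
  · intro h F hF hF0 hdet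
    choose p hp using fun i => (hF i).exists_eq_coe hI
    obtain rfl : F = fun i => (p i : MvPowerSeries (Fin n) R) := funext hp
    obtain ⟨G, hGp, hpG⟩ := h p hF0 ((tateUnit_coe_iff hI _).mp (det_psDeriv_coe p ▸ hdet))
    refine ⟨fun i => G i, fun i => tateMem_coe (G i), fun i => ?_, fun i => ?_, fun i => ?_⟩
    · change MvPolynomial.constantCoeff (G i) = 0
      simpa [MvPolynomial.constantCoeff_bind₁_of_constantCoeff_eq_zero hF0] using
        congrArg MvPolynomial.constantCoeff (hpG i)
    · simp [psSubst_coe, hGp]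
    · simp [psSubst_coe, hpG]

end Reduction

theorem stmt_16_general (R : Type*) [CommRing R] (I : Ideal R) (e : ℕ)
    (hIe : I ^ e = ⊥) (n : ℕ) :
    TJC R I n ↔ JC R n :=
  (tjc_iff_jcAtOrigin hIe).trans jc_iff_jcAtOrigin.symm

/-- If `I` is a nilpotent ideal of `R`, then `TJC(R,I,n)` is equivalent to `JC(R,n)`. -/
theorem stmt_16 (R : Type*) [CommRing R] (I : Ideal R) (e : ℕ) (he : 1 ≤ e)
    (hIe : I ^ e = ⊥) (n : ℕ) (hn : 1 ≤ n) :
    TJC R I n ↔ JC R n :=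
  stmt_16_general R I e hIe n
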